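/- arXiv:1512.05293 — 2 statements merged into one kernel-verified Lean document; each statement's English description precedes it below -/
import Mathlib

section
/- The Hurwitz type poly-Bernoulli numbers B_{n,a}^{(k)} defined by the generating function Φ(1-e^{-t}, k, a) = Σ_{n≥0} B_{n,a}^{(k)} t^n/n! satisfy the explicit formula B_{n,a}^{(k)} = (-1)^n Σ_{m=0}^{n} (-1)^m m! S(n,m) / (m+a)^k, where S(n,m) are Stirling numbers of the second kind. -/
open scoped BigOperators
open Finset

/-- Stirling numbers of the second kind. -/
def S2 : ℕ → ℕ → ℕ
  | 0, 0 => 1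
  | 0, _ + 1 => 0
  | _ + 1, 0 => 0
  | n + 1, m + 1 => (m + 1) * S2 n (m + 1) + S2 n m

/-- Multiple polylogarithm Li_{(k_1,...,k_r)}(z); for r = 0 it is z/(1-z). -/
noncomputable def multiLi : (r : ℕ) → (Fin r → ℤ) → ℝ → ℝ
  | 0, _, z => z / (1 - z)
  | r + 1, k, z =>
      ∑' m : {f : Fin (r + 1) → ℕ // StrictMono f ∧ 0 < f 0},
        z ^ (m.1 (Fin.last r)) / ∏ i, ((m.1 i : ℝ)) ^ (k i)

/-- Generalized Hurwitz-Lerch multiple zeta value Φ_{(k_1,...,k_{r+1})}(z,a). -/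
noncomputable def multiPhi (r : ℕ) (k : Fin (r + 1) → ℤ) (z a : ℝ) : ℝ :=
  ∑' m : {f : Fin (r + 1) → ℕ // Monotone f},
    z ^ (m.1 (Fin.last r)) /
      ∏ i, ((m.1 i : ℝ) + a - ((r : ℝ) + 1) + ((i : ℕ) + 1)) ^ (k i)

/-! By the binomial theorem and the explicit formula
`m! S(n,m) = ∑_{j ≤ m} (-1)^(j+m) C(m,j) j^n`, one has
`(e^x - 1)^m / m! = ∑_n S(n,m) x^n / n!`.
Substituting `x = -t` turns `Φ(1 - e^{-t}, k, a)` into a double series over `(m, n)` that vanishes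
for `n < m` and converges absolutely for `|t| < log 2` (its absolute values sum to
`Φ(e^{|t|} - 1, k, a)`). Summing it over `m ≤ n` first gives an exponential generating function
with the claimed coefficients, and such coefficients are determined by the function near `0`. -/

open Real
open scoped Nat

theorem S2_eq_stirlingSecond : S2 = Nat.stirlingSecond := by
  funext n m
  induction n generalizing m with
  | zero => cases m <;> rfl
  | succ n ih =>
    cases m with
    | zero => rfl
    | succ m => simp only [S2, Nat.stirlingSecond_succ_succ, ih]

theorem natCast_mul_choose_succ {R : Type*} [CommRing R] (m j : ℕ) :
    (j : R) * (m + 1).choose j = (m + 1) * ((m + 1).choose j - m.choose j) := by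
  cases j with
  | zero => simp
  | succ i =>
    have h₁ := congrArg (Nat.cast : ℕ → R) (Nat.add_one_mul_choose_eq m i)
    have h₂ := congrArg (Nat.cast : ℕ → R) (Nat.choose_succ_succ' m i)
    push_cast at h₁ h₂ ⊢
    linear_combination -h₁ - (m + 1 : R) * h₂

theorem sum_neg_one_pow_mul_choose_mul_pow {R : Type*} [CommRing R] (n m : ℕ) :
    ∑ j ∈ range (m + 1), (-1 : R) ^ (j + m) * m.choose j * (j : R) ^ n =
      m ! * Nat.stirlingSecond n m := by
  induction n generalizing m with
  | zero =>
    have h := sub_pow (1 : R) 1 m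
    simp only [sub_self, one_pow, mul_one] at h
    cases m with
    | zero => simp
    | succ m => simpa [zero_pow (Nat.succ_ne_zero m)] using h.symm
  | succ n ih =>
    cases m with
    | zero => simp
    | succ m =>
      have htrim : ∑ j ∈ range (m + 2), (-1 : R) ^ (j + m) * m.choose j * (j : R) ^ n =
          ∑ j ∈ range (m + 1), (-1 : R) ^ (j + m) * m.choose j * (j : R) ^ n := by
        simp [sum_range_succ _ (m + 1)]
      calc ∑ j ∈ range (m + 2), (-1 : R) ^ (j + (m + 1)) * (m + 1).choose j * (j : R) ^ (n + 1)
          = ∑ j ∈ range (m + 2), ((m + 1) *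
              ((-1 : R) ^ (j + (m + 1)) * (m + 1).choose j * (j : R) ^ n) +
              (m + 1) * ((-1 : R) ^ (j + m) * m.choose j * (j : R) ^ n)) := by
            refine sum_congr rfl fun j _ => ?_
            linear_combination ((-1 : R) ^ (j + (m + 1)) * (j : R) ^ n) *
              natCast_mul_choose_succ (R := R) m j
        _ = (m + 1) * ((m + 1)! * Nat.stirlingSecond n (m + 1)) +
              (m + 1) * (m ! * Nat.stirlingSecond n m) := by
            rw [sum_add_distrib, ← mul_sum, ← mul_sum, htrim, ih, ih]
        _ = (m + 1)! * Nat.stirlingSecond (n + 1) (m + 1) := by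
            rw [Nat.stirlingSecond_succ_succ, Nat.factorial_succ]
            push_cast
            ring

theorem hasSum_exp_sub_one_pow_div_factorial (m : ℕ) (x : ℝ) :
    HasSum (fun n => (Nat.stirlingSecond n m : ℝ) * x ^ n / n !) ((exp x - 1) ^ m / m !) := by
  have hterm (j : ℕ) : HasSum (fun n => (-1 : ℝ) ^ (j + m) * m.choose j * ((j * x) ^ n / n !))
      ((-1 : ℝ) ^ (j + m) * m.choose j * exp (j * x)) := by
    rw [exp_eq_exp_ℝ]
    exact (NormedSpace.expSeries_div_hasSum_exp (j * x)).mul_left _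
  have hsum := (hasSum_sum (s := range (m + 1)) fun j _ => hterm j).div_const (m ! : ℝ)
  have hval : (exp x - 1) ^ m =
      ∑ j ∈ range (m + 1), (-1 : ℝ) ^ (j + m) * m.choose j * exp (j * x) := by
    rw [sub_pow]
    exact sum_congr rfl fun j _ => by rw [exp_nat_mul]; ring
  rw [hval]
  refine hsum.congr_fun fun n => ?_
  simp_rw [mul_pow, ← mul_div_assoc, ← sum_div, ← mul_assoc, ← sum_mul,
    sum_neg_one_pow_mul_choose_mul_pow]
  field_simp

noncomputable def hurwitzLerch (z : ℝ) (k : ℤ) (a : ℝ) : ℝ :=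
  ∑' m : ℕ, z ^ m / ((m : ℝ) + a) ^ k

theorem summable_pow_div_add_zpow (k : ℤ) {a q : ℝ} (ha : 0 < a) (hq₀ : 0 ≤ q)
    (hq₁ : q < 1) : Summable fun m : ℕ => q ^ m / ((m : ℝ) + a) ^ k := by
  obtain ⟨K, rfl | rfl⟩ := Int.eq_nat_or_neg k
  · refine ((summable_geometric_of_lt_one hq₀ hq₁).div_const (a ^ K)).of_nonneg_of_le
      (fun m => by positivity) fun m => ?_
    rw [zpow_natCast]
    gcongr
    exact le_add_of_nonneg_left m.cast_nonneg
  · have hq : ‖q‖ < 1 := by rwa [norm_of_nonneg hq₀]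
    simp_rw [zpow_neg, zpow_natCast, div_inv_eq_mul, add_pow, mul_sum]
    refine summable_sum fun j _ => ?_
    refine ((summable_pow_mul_geometric_of_norm_lt_one j hq).mul_right
      (a ^ (K - j) * K.choose j)).congr fun m => ?_
    ring

theorem hurwitzLerch_pos (k : ℤ) {a q : ℝ} (ha : 0 < a) (hq₀ : 0 ≤ q) (hq₁ : q < 1) :
    0 < hurwitzLerch q k a :=
  (summable_pow_div_add_zpow k ha hq₀ hq₁).tsum_pos (fun m => by positivity) 0
    (by simp only [pow_zero, CharP.cast_eq_zero, zero_add]; positivity)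

theorem hasSum_sum_range_of_eq_zero_of_lt {E : Type*} [NormedAddCommGroup E] [CompleteSpace E]
    {F : ℕ → ℕ → E} {g : ℕ → E} {G : ℕ → ℝ} (hrow : ∀ m, HasSum (F m) (g m))
    (hnorm : ∀ m, HasSum (fun n => ‖F m n‖) (G m)) (hG : Summable G)
    (hF : ∀ m n, n < m → F m n = 0) :
    HasSum (fun n => ∑ m ∈ range (n + 1), F m n) (∑' m, g m) := by
  have hsum : Summable fun p : ℕ × ℕ => F p.1 p.2 := by
    refine Summable.of_norm ((summable_prod_of_nonneg fun _ => norm_nonneg _).2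
      ⟨fun m => (hnorm m).summable, ?_⟩)
    simpa only [(hnorm _).tsum_eq] using hG
  have htot : HasSum (fun p : ℕ × ℕ => F p.1 p.2) (∑' m, g m) := by
    rw [(hsum.hasSum.prod_fiberwise hrow).tsum_eq]
    exact hsum.hasSum
  exact ((Equiv.prodComm ℕ ℕ).hasSum_iff.2 htot).prod_fiberwise fun n =>
    hasSum_sum_of_ne_finset_zero fun m hm => hF m n (by simpa using hm)

theorem hasSum_hurwitzLerch_one_sub_exp_neg (k : ℤ) {a t : ℝ} (ha : 0 < a)
    (ht : |t| < log 2) :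
    HasSum (fun n : ℕ => ((-1) ^ n * ∑ m ∈ range (n + 1),
        (-1) ^ m * (m ! : ℝ) * Nat.stirlingSecond n m / ((m : ℝ) + a) ^ k) * t ^ n / n !)
      (hurwitzLerch (1 - exp (-t)) k a) := by
  let F (m n : ℕ) : ℝ :=
    (-1) ^ m * m ! * ((Nat.stirlingSecond n m * (-t) ^ n / n !) / ((m : ℝ) + a) ^ k)
  have hrow (m : ℕ) : HasSum (F m) ((1 - exp (-t)) ^ m / ((m : ℝ) + a) ^ k) := by
    have hval : (-1) ^ m * (m ! : ℝ) * ((exp (-t) - 1) ^ m / m ! / ((m : ℝ) + a) ^ k) =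
        (1 - exp (-t)) ^ m / ((m : ℝ) + a) ^ k := by
      rw [show 1 - exp (-t) = -1 * (exp (-t) - 1) by ring, mul_pow]
      field_simp
    rw [← hval]
    exact ((hasSum_exp_sub_one_pow_div_factorial m (-t)).div_const _).mul_left _
  have hnorm (m : ℕ) : HasSum (fun n => ‖F m n‖)
      (m ! * ((exp |t| - 1) ^ m / m ! / ((m : ℝ) + a) ^ k)) := by
    refine (((hasSum_exp_sub_one_pow_div_factorial m |t|).div_const _).mul_left _).congr_fun
      fun n => ?_
    simp [F, abs_of_pos (by positivity : 0 < (m : ℝ) + a)]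
  have hq₁ : exp |t| - 1 < 1 := by
    linarith [(lt_log_iff_exp_lt two_pos).1 ht]
  have hG : Summable fun m : ℕ => (m ! : ℝ) * ((exp |t| - 1) ^ m / m ! / ((m : ℝ) + a) ^ k) :=
    (summable_pow_div_add_zpow k ha (by simp) hq₁).congr fun m => by field_simp
  refine (hasSum_sum_range_of_eq_zero_of_lt hrow hnorm hG fun m n hnm => ?_).congr_fun fun n => ?_
  · simp [F, Nat.stirlingSecond_eq_zero_of_lt hnm]
  · rw [mul_sum, sum_mul, sum_div]
    refine sum_congr rfl fun m _ => ?_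
    simp only [F]
    ring

theorem eq_of_tsum_mul_pow_div_factorial_eq {b c : ℕ → ℝ} {r : ℝ} (hr : 0 < r)
    (hb : Summable fun n => b n * r ^ n / n !) (hc : Summable fun n => c n * r ^ n / n !)
    (h : ∀ x, |x| < r → ∑' n, b n * x ^ n / n ! = ∑' n, c n * x ^ n / n !) : b = c := by
  let p (e : ℕ → ℝ) := FormalMultilinearSeries.ofScalars ℝ fun n => e n / (n ! : ℝ)
  have hp {e : ℕ → ℝ} (he : Summable fun n => e n * r ^ n / n !) :
      HasFPowerSeriesAt (p e).sum (p e) 0 := by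
    refine ((p e).hasFPowerSeriesOnBall (lt_of_lt_of_le (by simpa using hr)
      ((p e).le_radius_of_summable_norm (r := r.toNNReal) ?_))).hasFPowerSeriesAt
    refine he.abs.congr fun n => ?_
    simp only [p, FormalMultilinearSeries.ofScalars_norm, norm_div, norm_eq_abs,
      RCLike.norm_natCast, coe_toNNReal', max_eq_left hr.le, abs_mul, abs_div, abs_pow,
      abs_of_pos hr, Nat.abs_cast]
    ring
  have hpq := (hp hb).eq_formalMultilinearSeries_of_eventually (hp hc) (by
    filter_upwards [Metric.ball_mem_nhds (0 : ℝ) hr] with x hx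
    simp only [p, FormalMultilinearSeries.sum, FormalMultilinearSeries.ofScalars_apply_eq,
      smul_eq_mul]
    refine (tsum_congr fun n => ?_).trans ((h x (by simpa using hx)).trans
      (tsum_congr fun n => ?_)) <;> ring)
  funext n
  have := congrFun (FormalMultilinearSeries.ofScalars_series_injective ℝ ℝ hpq) n
  exact (div_left_inj' (by positivity)).1 this

/-- Explicit formula for Hurwitz type poly-Bernoulli numbers. -/
theorem hurwitz_poly_bernoulli_explicit (k : ℤ) (a : ℝ) (ha : 0 < a) (B : ℕ → ℝ)
    (ε : ℝ) (hε : 0 < ε)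
    (hB : ∀ t : ℝ, |t| < ε →
      ∑' n : ℕ, B n * t ^ n / (n.factorial : ℝ) =
        ∑' m : ℕ, (1 - Real.exp (-t)) ^ m / ((m : ℝ) + a) ^ k) :
    ∀ n : ℕ, B n = (-1 : ℝ) ^ n *
      ∑ m ∈ Finset.range (n + 1),
        (-1 : ℝ) ^ m * (m.factorial : ℝ) * (S2 n m : ℝ) / ((m : ℝ) + a) ^ k := by
  rw [S2_eq_stirlingSecond]
  obtain ⟨r, hr, hrmin⟩ := exists_between (lt_min hε (log_pos one_lt_two))
  obtain ⟨hrε, hr2⟩ := lt_min_iff.1 hrmin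
  have hexpand (x : ℝ) (hx : |x| ≤ r) :=
    hasSum_hurwitzLerch_one_sub_exp_neg k ha (hx.trans_lt hr2)
  -- `hB` only equates `tsum`s; the left side converges because the right one is positive.
  have hBsum : Summable fun n => B n * r ^ n / n ! := by
    by_contra hns
    have hpos := hurwitzLerch_pos k ha (sub_nonneg.2 (exp_le_one_iff.2 (by linarith)))
      (sub_lt_self 1 (exp_pos (-r)))
    exact hpos.ne ((tsum_eq_zero_of_not_summable hns).symm.trans (hB r (by rwa [abs_of_pos hr])))
  exact congrFun (eq_of_tsum_mul_pow_div_factorial_eq hr hBsum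
    (hexpand r (abs_of_pos hr).le).summable fun x hx =>
      (hB x (hx.trans hrε)).trans (hexpand x hx.le).tsum_eq.symm)
end

section
/- The generalized multi poly-Bernoulli polynomials satisfy B_n^{(k_1,...,k_r)}(x; a,b,c) = (ln a + ln b)^n · B_n^{(k_1,...,k_r)}((x ln c - r ln b)/(ln a + ln b)), where B_n^{(k_1,...,k_r)}(y) denotes the multi poly-Bernoulli polynomial defined by Li_{(k_1,...,k_r)}(1-e^{-t})/(1-e^{-t})^r · e^{yt} = Σ_{n≥0} B_n^{(k_1,...,k_r)}(y) t^n/n!. -/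
/-!
Put `L = log a + log b`, which is nonzero because `ab ≠ 1`, and
`y = (x log c - (r+1) log b) / L`. Then `(ab)^(-t) = e^(-Lt)`, `b^t - a^(-t) = b^t (1 - e^(-Lt))`
and `c^(xt) = b^((r+1)t) e^(yLt)`, so the generating function of the generalized polynomials at
`t` is the generating function of the plain ones at `Lt`; comparing coefficients gives the claim.
The hypotheses only equate `tsum`s, so convergence of the two series is recovered from the
positivity of the plain generating function for `t > 0`, i.e. from the convergence of the series
defining `Li(z)` for `0 < z < 1`, whose terms are dominated by a geometric series in all indices.
-/

open scoped BigOperators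
open Finset

open Filter Topology FormalMultilinearSeries

theorem summable_pi_prod_of_nonneg {α : Type*} {g : α → ℝ} (hg0 : 0 ≤ g) (hg : Summable g) :
    ∀ m : ℕ, Summable fun d : Fin m → α => ∏ i, g (d i)
  | 0 => Summable.of_finite
  | m + 1 => by
    have := hg.mul_of_nonneg (summable_pi_prod_of_nonneg hg0 hg m) hg0
      fun d => prod_nonneg fun i _ => hg0 _
    refine ((Fin.consEquiv fun _ => α).symm.summable_iff.mpr this).congr fun d => ?_
    simp [Fin.prod_univ_succ, Fin.tail]

theorem exists_pow_mul_pow_le_mul_pow {z u : ℝ} (hz : 0 ≤ z) (hzu : z < u) (N : ℕ) :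
    ∃ C, 0 ≤ C ∧ ∀ M : ℕ, (M : ℝ) ^ N * z ^ M ≤ C * u ^ M := by
  have hu : 0 < u := hz.trans_lt hzu
  obtain ⟨C, hC⟩ := (tendsto_pow_const_mul_const_pow_of_lt_one N (div_nonneg hz hu.le)
    ((div_lt_one hu).2 hzu)).bddAbove_range
  refine ⟨C, (by positivity : (0 : ℝ) ≤ (0 : ℕ) ^ N * (z / u) ^ 0).trans (hC ⟨0, rfl⟩),
    fun M => ?_⟩
  calc (M : ℝ) ^ N * z ^ M = (M : ℝ) ^ N * (z / u) ^ M * u ^ M := by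
        rw [div_pow, mul_assoc, div_mul_cancel₀ _ (pow_ne_zero _ hu.ne')]
    _ ≤ C * u ^ M := mul_le_mul_of_nonneg_right (hC ⟨M, rfl⟩) (pow_nonneg hu.le M)

theorem prod_zpow_le_pow_sum_natAbs {ι : Type*} [Fintype ι] {x : ι → ℝ} {M : ℝ}
    (hx : ∀ i, 1 ≤ x i) (hxM : ∀ i, x i ≤ M) (e : ι → ℤ) :
    ∏ i, x i ^ e i ≤ M ^ ∑ i, (e i).natAbs := by
  rw [← prod_pow_eq_pow_sum]
  refine prod_le_prod (fun i _ => zpow_nonneg (zero_le_one.trans (hx i)) _) fun i _ => ?_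
  calc x i ^ e i ≤ x i ^ ((e i).natAbs : ℤ) := zpow_le_zpow_right₀ (hx i) Int.le_natAbs
    _ = x i ^ (e i).natAbs := zpow_natCast _ _
    _ ≤ M ^ (e i).natAbs := pow_le_pow_left₀ (zero_le_one.trans (hx i)) (hxM i) _

section multiLi

variable (r : ℕ) (k : Fin (r + 1) → ℤ) {z : ℝ}

theorem summable_multiLi (hz0 : 0 ≤ z) (hz1 : z < 1) :
    Summable fun m : {f : Fin (r + 1) → ℕ // StrictMono f ∧ 0 < f 0} =>
      z ^ m.1 (Fin.last r) / ∏ i, (m.1 i : ℝ) ^ k i := by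
  obtain ⟨u, hzu, hu1⟩ := exists_between hz1
  have hu0 : 0 < u := hz0.trans_lt hzu
  set w := u ^ ((r + 1 : ℕ) : ℝ)⁻¹
  have hw0 : 0 ≤ w := by positivity
  have hw1 : w < 1 := Real.rpow_lt_one hu0.le hu1 (by positivity)
  have hwu : w ^ (r + 1) = u := Real.rpow_inv_natCast_pow hu0.le r.succ_ne_zero
  obtain ⟨C, hC0, hC⟩ := exists_pow_mul_pow_le_mul_pow hz0 hzu (∑ i, (-k i).natAbs)
  refine Summable.of_nonneg_of_le (fun m => by positivity) (fun ⟨f, hf, hf0⟩ => ?_)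
    (((summable_pi_prod_of_nonneg (fun n => pow_nonneg hw0 n)
      (summable_geometric_of_lt_one hw0 hw1) (r + 1)).mul_left C).comp_injective
        Subtype.val_injective)
  set M := f (Fin.last r)
  have hf1 : ∀ i, (1 : ℝ) ≤ f i := fun i => mod_cast hf0.trans_le (hf.monotone (Fin.zero_le i))
  have hfM : ∀ i, f i ≤ M := fun i => hf.monotone (Fin.le_last i)
  calc z ^ M / ∏ i, (f i : ℝ) ^ k i = (∏ i, (f i : ℝ) ^ (-k i)) * z ^ M := by
        simp only [zpow_neg, prod_inv_distrib, div_eq_inv_mul]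
    _ ≤ (M : ℝ) ^ (∑ i, (-k i).natAbs) * z ^ M :=
        mul_le_mul_of_nonneg_right
          (prod_zpow_le_pow_sum_natAbs hf1 (fun i => by exact_mod_cast hfM i) _)
          (pow_nonneg hz0 M)
    _ ≤ C * ∏ _i : Fin (r + 1), w ^ M := by
        rw [Fin.prod_const, ← pow_mul, mul_comm M, pow_mul, hwu]; exact hC M
    _ ≤ C * ∏ i, w ^ f i :=
        mul_le_mul_of_nonneg_left (prod_le_prod (fun i _ => by positivity)
          fun i _ => pow_le_pow_of_le_one hw0 hw1.le (hfM i)) hC0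

theorem multiLi_pos (hz0 : 0 < z) (hz1 : z < 1) : 0 < multiLi (r + 1) k z :=
  (summable_multiLi r k hz0.le hz1).tsum_pos (fun m => by positivity)
    ⟨fun i => i + 1, fun i j hij => by simpa using hij, Nat.succ_pos 0⟩ (by positivity)

end multiLi

theorem summable_of_tsum_ne_zero {ι α : Type*} [AddCommMonoid α] [TopologicalSpace α]
    {f : ι → α} (h : ∑' i, f i ≠ 0) : Summable f :=
  not_not.mp fun hf => h (tsum_eq_zero_of_not_summable hf)

section PowerSeries

variable {𝕜 : Type*} [NontriviallyNormedField 𝕜]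

theorem ofScalars_radius_pos_of_summable {c : ℕ → 𝕜} {t₀ : 𝕜} (ht₀ : t₀ ≠ 0)
    (hc : Summable fun n => c n * t₀ ^ n) : 0 < (ofScalars 𝕜 c).radius :=
  lt_of_lt_of_le (by simpa using ht₀) <| (ofScalars 𝕜 c).le_radius_of_tendsto (r := ‖t₀‖₊)
    (by simpa [ofScalars_norm] using hc.tendsto_atTop_zero.norm)

/-- A divergent series has `tsum` equal to `0`, so a point where `F ≠ 0` supplies the convergence
that uniqueness of power series coefficients needs. -/
theorem eq_of_tsum_mul_pow_eventually_eq [CompleteSpace 𝕜] {c c' : ℕ → 𝕜} {F : 𝕜 → 𝕜}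
    (hc : ∀ᶠ t in 𝓝[≠] 0, ∑' n, c n * t ^ n = F t)
    (hc' : ∀ᶠ t in 𝓝[≠] 0, ∑' n, c' n * t ^ n = F t) (hF : ∃ᶠ t in 𝓝[≠] 0, F t ≠ 0) :
    c = c' := by
  obtain ⟨t₀, ⟨⟨hF₀, ht₀⟩, hct₀, hc't₀⟩⟩ :=
    ((hF.and_eventually self_mem_nhdsWithin).and_eventually (hc.and hc')).exists
  have hp := ((ofScalars 𝕜 c).hasFPowerSeriesOnBall (ofScalars_radius_pos_of_summable ht₀
    (summable_of_tsum_ne_zero (hct₀ ▸ hF₀)))).hasFPowerSeriesAt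
  have hp' := ((ofScalars 𝕜 c').hasFPowerSeriesOnBall (ofScalars_radius_pos_of_summable ht₀
    (summable_of_tsum_ne_zero (hc't₀ ▸ hF₀)))).hasFPowerSeriesAt
  refine (ofScalars_series_eq_iff 𝕜 c c').mp (hp.eq_formalMultilinearSeries_of_eventually hp'
    ((hp.continuousAt.eventuallyEq_nhds_iff_eventuallyEq_nhdsNE hp'.continuousAt).mp ?_))
  change ofScalarsSum c =ᶠ[𝓝[≠] 0] ofScalarsSum c'
  simp only [ofScalarsSum_eq_tsum, smul_eq_mul]
  exact (hc.and hc').mono fun t h => h.1.trans h.2.symm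

end PowerSeries

section GeneratingFunctions

open Real

variable (r : ℕ) (k : Fin (r + 1) → ℤ)

noncomputable def multiPolyBernoulliGF (y t : ℝ) : ℝ :=
  multiLi (r + 1) k (1 - exp (-t)) / (1 - exp (-t)) ^ (r + 1) * exp (y * t)

noncomputable def genMultiPolyBernoulliGF (a b c x t : ℝ) : ℝ :=
  multiLi (r + 1) k (1 - (a * b) ^ (-t)) / (b ^ t - a ^ (-t)) ^ (r + 1) * c ^ (x * t)

theorem multiPolyBernoulliGF_pos (y : ℝ) {s : ℝ} (hs : 0 < s) :
    0 < multiPolyBernoulliGF r k y s := by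
  have h0 := exp_pos (-s)
  have h1 : exp (-s) < 1 := exp_lt_one_iff.mpr (neg_neg_of_pos hs)
  exact mul_pos (div_pos (multiLi_pos r k (by linarith) (by linarith))
    (pow_pos (by linarith) _)) (exp_pos _)

theorem frequently_multiPolyBernoulliGF_ne_zero (y : ℝ) :
    ∃ᶠ s in 𝓝[≠] 0, multiPolyBernoulliGF r k y s ≠ 0 :=
  (eventually_nhdsWithin_of_forall (s := Set.Ioi 0) fun _ hs =>
    (multiPolyBernoulliGF_pos r k y hs).ne').frequently.filter_mono
      (nhdsWithin_mono _ fun _ hs => ne_of_gt hs)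

theorem genMultiPolyBernoulliGF_eq_multiPolyBernoulliGF {a b c : ℝ} (ha : 0 < a) (hb : 0 < b)
    (hc : 0 < c) (hL : log a + log b ≠ 0) (x t : ℝ) :
    genMultiPolyBernoulliGF r k a b c x t = multiPolyBernoulliGF r k
      ((x * log c - (r + 1) * log b) / (log a + log b)) ((log a + log b) * t) := by
  have hz : (a * b) ^ (-t) = exp (-((log a + log b) * t)) := by
    rw [rpow_def_of_pos (mul_pos ha hb), log_mul ha.ne' hb.ne']
    ring_nf
  have hden : b ^ t - a ^ (-t) = exp (log b * t) * (1 - exp (-((log a + log b) * t))) := by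
    rw [rpow_def_of_pos hb, rpow_def_of_pos ha, mul_sub, mul_one, ← exp_add]
    ring_nf
  have hpow : c ^ (x * t) = exp (log b * t) ^ (r + 1) *
      exp ((x * log c - (r + 1) * log b) / (log a + log b) * ((log a + log b) * t)) := by
    rw [rpow_def_of_pos hc, ← exp_nat_mul, ← exp_add]
    congr 1
    field_simp
    push_cast
    ring
  rw [genMultiPolyBernoulliGF, multiPolyBernoulliGF, hz, hden, hpow, mul_pow]
  field_simp

end GeneratingFunctions

/-- Relation between generalized multi poly-Bernoulli polynomials and the plain
multi poly-Bernoulli polynomials. -/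
theorem genMultiPolyBernoulli_eq_scaled (r : ℕ) (k : Fin (r + 1) → ℤ) (a b c : ℝ)
    (ha : 0 < a) (hb : 0 < b) (hc : 0 < c) (hab : a * b ≠ 1)
    (Bg : ℕ → ℝ → ℝ) (Bp : ℕ → ℝ → ℝ) (ε : ℝ) (hε : 0 < ε)
    (hBg : ∀ (x t : ℝ), |t| < ε → t ≠ 0 →
      ∑' n : ℕ, Bg n x * t ^ n / (n.factorial : ℝ) =
        multiLi (r + 1) k (1 - (a * b) ^ (-t)) / (b ^ t - a ^ (-t)) ^ (r + 1) *
          c ^ (x * t))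
    (hBp : ∀ (y t : ℝ), |t| < ε → t ≠ 0 →
      ∑' n : ℕ, Bp n y * t ^ n / (n.factorial : ℝ) =
        multiLi (r + 1) k (1 - Real.exp (-t)) / (1 - Real.exp (-t)) ^ (r + 1) *
          Real.exp (y * t)) :
    ∀ (n : ℕ) (x : ℝ), Bg n x =
      (Real.log a + Real.log b) ^ n *
        Bp n ((x * Real.log c - ((r : ℝ) + 1) * Real.log b) / (Real.log a + Real.log b)) := by
  intro n x
  set L := Real.log a + Real.log b
  set y := (x * Real.log c - ((r : ℝ) + 1) * Real.log b) / L
  have hL : L ≠ 0 := by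
    simp only [L, ← Real.log_mul ha.ne' hb.ne']
    exact Real.log_ne_zero_of_pos_of_ne_one (mul_pos ha hb) hab
  have hnear : ∀ᶠ s in 𝓝[≠] (0 : ℝ), (|s / L| < ε ∧ |s| < ε) ∧ s ≠ 0 :=
    ((((continuous_id.div_const L).abs.tendsto' 0 0 (by simp)).eventually (gt_mem_nhds hε)).and
      ((continuous_abs.tendsto' 0 0 abs_zero).eventually (gt_mem_nhds hε))).filter_mono
        nhdsWithin_le_nhds |>.and self_mem_nhdsWithin
  have hcoeff := eq_of_tsum_mul_pow_eventually_eq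
    (c := fun m => Bg m x / L ^ m / m.factorial) (c' := fun m => Bp m y / m.factorial)
    (hnear.mono fun s ⟨⟨hsL, _⟩, hs0⟩ => by
      calc ∑' m, Bg m x / L ^ m / m.factorial * s ^ m
          = ∑' m, Bg m x * (s / L) ^ m / m.factorial := tsum_congr fun m => by ring
        _ = multiPolyBernoulliGF r k y (L * (s / L)) :=
          (hBg x _ hsL (div_ne_zero hs0 hL)).trans
            (genMultiPolyBernoulliGF_eq_multiPolyBernoulliGF r k ha hb hc hL x _)
        _ = multiPolyBernoulliGF r k y s := by rw [mul_div_cancel₀ s hL])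
    (hnear.mono fun s ⟨⟨_, hs⟩, hs0⟩ =>
      (tsum_congr fun m => by ring).trans (hBp y s hs hs0))
    (frequently_multiPolyBernoulliGF_ne_zero r k y)
  have := congrFun hcoeff n
  field_simp at this
  exact this
end
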